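/- Let A₁ and A₂ be Hermitian complex square matrices with A₁² = I and A₂² = I, and set P = I + A₁⊗A₂. Then for every matrix M, P M P = M + (A₁⊗A₂)M(A₁⊗A₂) + (1/8)·Σ_{α₁,α₂∈{±1}} α₁α₂ [ ((I+α₁A₁)⊗(I+α₂A₂)) M ((I+α₁A₁)⊗(I+α₂A₂))† − ((I+iα₁A₁)⊗(I+iα₂A₂)) M ((I+iα₁A₁)⊗(I+iα₂A₂))† ]. -/

import Mathlib

open Matrix Kronecker

/-!
Write `K = (1 + a A₁) ⊗ (1 + b A₂) = 1 + a B₁ + b B₂ + ab T` with `B₁ = A₁ ⊗ 1`, `B₂ = 1 ⊗ A₂`,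
`T = A₁ ⊗ A₂`. Expanding `K M K†`, the weight `α₁α₂` averaged over the signs keeps exactly the
terms whose coefficient has odd degree in both `α₁` and `α₂`: `TM`, `MT†`, `B₁MB₂†`, `B₂MB₁†`.
Replacing `α` by `iα` flips the sign of the first two and keeps the last two, so the difference
of the two sums is `8 (TM + MT†)`. Since `PMP = M + TM + MT + TMT` and `T` is Hermitian, this
is the claim.
-/

theorem one_add_smul_kronecker_one_add_smul {R l m : Type*} [CommSemiring R]
    [DecidableEq l] [DecidableEq m] (A : Matrix l l R) (B : Matrix m m R) (a b : R) :
    (1 + a • A) ⊗ₖ (1 + b • B) = 1 + a • (A ⊗ₖ 1) + b • (1 ⊗ₖ B) + (a * b) • (A ⊗ₖ B) := by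
  simp only [kronecker_add, add_kronecker, smul_kronecker, kronecker_smul, one_kronecker_one]
  module

theorem sum_sign_smul_sandwich_sub_sandwich_I {R : Type*} [Ring R] [StarRing R] [Algebra ℂ R]
    [StarModule ℂ R] (B₁ B₂ T M : R) (K : ℂ → ℂ → R)
    (hK : ∀ a b, K a b = 1 + a • B₁ + b • B₂ + (a * b) • T) :
    ∑ α₁ ∈ ({1, -1} : Finset ℂ), ∑ α₂ ∈ ({1, -1} : Finset ℂ), (α₁ * α₂) •
        (K α₁ α₂ * M * star (K α₁ α₂) -
          K (Complex.I * α₁) (Complex.I * α₂) * M * star (K (Complex.I * α₁) (Complex.I * α₂))) =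
      (8 : ℂ) • (T * M + M * star T) := by
  simp only [Finset.sum_pair (show (1 : ℂ) ≠ -1 by norm_num), hK, star_add, star_smul, star_one,
    Complex.star_def, map_mul, map_neg, map_one, Complex.conj_I]
  simp only [mul_add, add_mul, smul_mul_assoc, mul_smul_comm, one_mul, mul_one,
    smul_sub, smul_add, smul_smul, mul_assoc]
  match_scalars <;> ring_nf <;> simp only [Complex.I_sq] <;> ring

theorem stmt_8_general (n m : ℕ)
    (A₁ : Matrix (Fin n) (Fin n) ℂ) (A₂ : Matrix (Fin m) (Fin m) ℂ)
    (hH₁ : A₁.IsHermitian) (hH₂ : A₂.IsHermitian)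
    (M : Matrix (Fin n × Fin m) (Fin n × Fin m) ℂ) :
    let T : Matrix (Fin n × Fin m) (Fin n × Fin m) ℂ := A₁ ⊗ₖ A₂
    let P := (1 : Matrix (Fin n × Fin m) (Fin n × Fin m) ℂ) + T
    P * M * P =
      M + T * M * T +
        ((8 : ℂ))⁻¹ • ∑ α₁ ∈ ({1, -1} : Finset ℂ), ∑ α₂ ∈ ({1, -1} : Finset ℂ),
          (α₁ * α₂) •
            ((((1 + α₁ • A₁) ⊗ₖ (1 + α₂ • A₂)) * M *
                (((1 + α₁ • A₁) ⊗ₖ (1 + α₂ • A₂)))ᴴ) -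
              (((1 + (Complex.I * α₁) • A₁) ⊗ₖ (1 + (Complex.I * α₂) • A₂)) * M *
                (((1 + (Complex.I * α₁) • A₁) ⊗ₖ (1 + (Complex.I * α₂) • A₂)))ᴴ)) := by
  intro T P
  have hT : Tᴴ = T := by rw [conjTranspose_kronecker, hH₁.eq, hH₂.eq]
  have hsum := sum_sign_smul_sandwich_sub_sandwich_I (A₁ ⊗ₖ 1) (1 ⊗ₖ A₂) T M
    (fun a b => (1 + a • A₁) ⊗ₖ (1 + b • A₂))
    (fun a b => one_add_smul_kronecker_one_add_smul A₁ A₂ a b)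
  simp only [star_eq_conjTranspose, hT] at hsum
  rw [hsum, smul_smul, inv_mul_cancel₀ (by norm_num), one_smul]
  simp only [P, add_mul, mul_add, one_mul, mul_one]
  abel

theorem stmt_8 (n m : ℕ)
    (A₁ : Matrix (Fin n) (Fin n) ℂ) (A₂ : Matrix (Fin m) (Fin m) ℂ)
    (hA₁ : A₁ * A₁ = 1) (hA₂ : A₂ * A₂ = 1)
    (hH₁ : A₁.IsHermitian) (hH₂ : A₂.IsHermitian)
    (M : Matrix (Fin n × Fin m) (Fin n × Fin m) ℂ) :
    let T : Matrix (Fin n × Fin m) (Fin n × Fin m) ℂ := A₁ ⊗ₖ A₂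
    let P := (1 : Matrix (Fin n × Fin m) (Fin n × Fin m) ℂ) + T
    P * M * P =
      M + T * M * T +
        ((8 : ℂ))⁻¹ • ∑ α₁ ∈ ({1, -1} : Finset ℂ), ∑ α₂ ∈ ({1, -1} : Finset ℂ),
          (α₁ * α₂) •
            ((((1 + α₁ • A₁) ⊗ₖ (1 + α₂ • A₂)) * M *
                (((1 + α₁ • A₁) ⊗ₖ (1 + α₂ • A₂)))ᴴ) -
              (((1 + (Complex.I * α₁) • A₁) ⊗ₖ (1 + (Complex.I * α₂) • A₂)) * M *
                (((1 + (Complex.I * α₁) • A₁) ⊗ₖ (1 + (Complex.I * α₂) • A₂)))ᴴ)) :=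
  stmt_8_general n m A₁ A₂ hH₁ hH₂ M
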